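/- arXiv:1209.4505 — 7 statements merged into one kernel-verified Lean document; each statement's English description precedes it below -/
import Mathlib

section
/- For n = 2m+1 odd, the signed sum over all binary sequences ε = (ε_1,...,ε_n) ∈ {0,1}^n of (-1)^{σ(ε)}, where σ(ε) is the number modulo 2 of pairs j < k with ε_j = 0 and ε_k = 1, equals 2^{m+1}. -/
/-- For `ε : Fin n → Bool`, number of pairs `j < k` with `ε j = false` and `ε k = true`. -/
def sigmaCount (n : ℕ) (ε : Fin n → Bool) : ℕ :=
  (Finset.univ.filter (fun p : Fin n × Fin n => p.1 < p.2 ∧ ε p.1 = false ∧ ε p.2 = true)).card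

def onesC (n : ℕ) (ε : Fin n → Bool) : ℕ :=
  (Finset.univ.filter (fun k => ε k = true)).card

def D (n : ℕ) : ℤ := ∑ ε : Fin n → Bool, (-1 : ℤ) ^ sigmaCount n ε
def G (n : ℕ) : ℤ := ∑ ε : Fin n → Bool, (-1 : ℤ) ^ (sigmaCount n ε + onesC n ε)

lemma ones_cons (n : ℕ) (b : Bool) (ε : Fin n → Bool) :
    onesC (n + 1) (Fin.cons b ε) = onesC n ε + (if b then 1 else 0) := by
  classical
  simp only [onesC, Finset.card_filter]
  rw [Fin.sum_univ_succ]
  cases b <;> simp [Bool.false_eq_true, add_comm]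

lemma sigma_cons (n : ℕ) (b : Bool) (ε : Fin n → Bool) :
    sigmaCount (n + 1) (Fin.cons b ε) = sigmaCount n ε + (if b then 0 else onesC n ε) := by
  classical
  have h0 : (∑ j : Fin (n + 1), if ((0 : Fin (n+1)) < j ∧ (Fin.cons b ε : Fin (n+1) → Bool) 0 = false ∧ (Fin.cons b ε : Fin (n+1) → Bool) j = true) then (1:ℕ) else 0)
      = (if b then 0 else onesC n ε) := by
    rw [Fin.sum_univ_succ]
    cases b
    · simp only [Fin.cons_zero, Fin.cons_succ, lt_self_iff_false, false_and, if_false,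
        Fin.succ_pos, true_and, and_self, zero_add, Bool.false_eq_true]
      rw [onesC, Finset.card_filter]
    · simp [Bool.false_eq_true]
  have h1 : ∀ i : Fin n, (∑ j : Fin (n + 1), if (i.succ < j ∧ (Fin.cons b ε : Fin (n+1) → Bool) i.succ = false ∧ (Fin.cons b ε : Fin (n+1) → Bool) j = true) then (1:ℕ) else 0)
      = ∑ j : Fin n, if (i < j ∧ ε i = false ∧ ε j = true) then (1:ℕ) else 0 := by
    intro i
    rw [Fin.sum_univ_succ]
    simp [Fin.cons_succ, Fin.succ_lt_succ_iff, (Fin.succ_pos i).not_gt]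
  simp only [sigmaCount, Finset.card_filter]
  rw [Fintype.sum_prod_type, Fintype.sum_prod_type, Fin.sum_univ_succ, h0]
  simp only [h1]
  rw [add_comm]

lemma sum_cons (n : ℕ) (f : (Fin (n + 1) → Bool) → ℤ) :
    ∑ ε : Fin (n + 1) → Bool, f ε = ∑ b : Bool, ∑ ε : Fin n → Bool, f (Fin.cons b ε) := by
  rw [← (Fin.consEquiv fun _ => Bool).sum_comp f, Fintype.sum_prod_type]
  rfl

lemma D_succ (n : ℕ) : D (n + 1) = D n + G n := by
  rw [D, sum_cons]
  simp only [sigma_cons, Fintype.sum_bool, Bool.false_eq_true, if_true, if_false, add_zero]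
  rw [D, G, add_comm]

lemma G_succ (n : ℕ) : G (n + 1) = D n - G n := by
  rw [G, sum_cons]
  simp only [sigma_cons, ones_cons, Fintype.sum_bool, Bool.false_eq_true, if_true, if_false,
    add_zero]
  have h1 : (∑ ε : Fin n → Bool, (-1 : ℤ) ^ (sigmaCount n ε + (onesC n ε + 1))) = -G n := by
    rw [G, ← Finset.sum_neg_distrib]
    refine Finset.sum_congr rfl fun ε _ => ?_
    rw [← add_assoc, pow_succ]
    ring
  have h2 : (∑ ε : Fin n → Bool, (-1 : ℤ) ^ (sigmaCount n ε + onesC n ε + onesC n ε)) = D n := by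
    rw [D]
    refine Finset.sum_congr rfl fun ε _ => ?_
    rw [add_assoc, pow_add, ← two_mul, pow_mul]
    norm_num
  rw [h1, h2]; ring

lemma DG_even (m : ℕ) : D (2 * m) = 2 ^ m ∧ G (2 * m) = 2 ^ m := by
  induction m with
  | zero =>
    constructor <;> simp [D, G, sigmaCount, onesC]
  | succ k ih =>
    have h : 2 * (k + 1) = (2 * k + 1) + 1 := by ring
    have hD1 : D (2 * k + 1) = 2 ^ k + 2 ^ k := by rw [D_succ, ih.1, ih.2]
    have hG1 : G (2 * k + 1) = 0 := by rw [G_succ, ih.1, ih.2]; ring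
    constructor
    · rw [h, D_succ, hD1, hG1]; ring
    · rw [h, G_succ, hD1, hG1]; ring

theorem stmt_0 (m : ℕ) :
    ∑ ε : Fin (2 * m + 1) → Bool, (-1 : ℤ) ^ sigmaCount (2 * m + 1) ε = 2 ^ (m + 1) := by
  have : D (2 * m + 1) = 2 ^ (m + 1) := by
    rw [D_succ, (DG_even m).1, (DG_even m).2]
    ring
  simpa [D] using this
end

section
/- Let M_n count binary sequences ε ∈ {0,1}^n with σ(ε) = 0, and P_n count sequences with σ(ε) + par(ε) = 0, where par(ε) is the parity of the number of entries equal to 1. Then M_n = M_{n-1} + P_{n-1} and P_n = 2^{n-1} - P_{n-1} + M_{n-1}. -/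
/-- Number of entries equal to `true` (i.e. to `1`). -/
def parCount (n : ℕ) (ε : Fin n → Bool) : ℕ :=
  (Finset.univ.filter (fun j : Fin n => ε j = true)).card

/-- `M n` counts binary sequences of length `n` with `σ(ε)` even. -/
def M (n : ℕ) : ℕ :=
  (Finset.univ.filter (fun ε : Fin n → Bool => sigmaCount n ε % 2 = 0)).card

/-- `P n` counts binary sequences of length `n` with `σ(ε) + par(ε)` even. -/
def P (n : ℕ) : ℕ :=
  (Finset.univ.filter
    (fun ε : Fin n → Bool => (sigmaCount n ε + parCount n ε) % 2 = 0)).card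

lemma sigmaCount_eq_sum (n : ℕ) (ε : Fin n → Bool) :
    sigmaCount n ε = ∑ j : Fin n, ∑ k : Fin n,
      if j < k ∧ ε j = false ∧ ε k = true then 1 else 0 := by
  rw [sigmaCount, Finset.card_filter, Fintype.sum_prod_type]

lemma parCount_eq_sum (n : ℕ) (ε : Fin n → Bool) :
    parCount n ε = ∑ k : Fin n, if ε k = true then 1 else 0 := by
  rw [parCount, Finset.card_filter]

lemma sigmaCount_cons (n : ℕ) (b : Bool) (ε : Fin n → Bool) :
    sigmaCount (n+1) (Fin.cons b ε) =
      sigmaCount n ε + if b then 0 else parCount n ε := by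
  rw [sigmaCount_eq_sum, sigmaCount_eq_sum, Fin.sum_univ_succ]
  simp_rw [Fin.sum_univ_succ]
  cases b <;>
    simp [Fin.cons_zero, Fin.cons_succ, Fin.succ_lt_succ_iff, Fin.succ_pos,
      parCount_eq_sum, Finset.sum_add_distrib, add_comm]

lemma parCount_cons (n : ℕ) (b : Bool) (ε : Fin n → Bool) :
    parCount (n+1) (Fin.cons b ε) = (if b then 1 else 0) + parCount n ε := by
  rw [parCount_eq_sum, parCount_eq_sum, Fin.sum_univ_succ]
  cases b <;> simp


lemma sc_false (m : ℕ) (ε : Fin m → Bool) :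
    sigmaCount (m+1) (Fin.cons false ε) = sigmaCount m ε + parCount m ε := by
  simp [sigmaCount_cons]

lemma sc_true (m : ℕ) (ε : Fin m → Bool) :
    sigmaCount (m+1) (Fin.cons true ε) = sigmaCount m ε := by
  simp [sigmaCount_cons]

lemma pc_false (m : ℕ) (ε : Fin m → Bool) :
    parCount (m+1) (Fin.cons false ε) = parCount m ε := by
  simp [parCount_cons]

lemma pc_true (m : ℕ) (ε : Fin m → Bool) :
    parCount (m+1) (Fin.cons true ε) = 1 + parCount m ε := by
  simp [parCount_cons]

lemma card_split (n : ℕ) (p : (Fin (n+1) → Bool) → Prop) [DecidablePred p] :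
    (Finset.univ.filter p).card =
      (Finset.univ.filter (fun ε : Fin n → Bool => p (Fin.cons false ε))).card +
      (Finset.univ.filter (fun ε : Fin n → Bool => p (Fin.cons true ε))).card := by
  classical
  simp_rw [Finset.card_filter]
  rw [← Fintype.sum_equiv (Fin.consEquiv (fun _ : Fin (n+1) => Bool))
    (fun x : Bool × (Fin n → Bool) => if p (Fin.cons x.1 x.2) then 1 else 0)
    (fun ε => if p ε then 1 else 0) (fun x => rfl)]
  rw [Fintype.sum_prod_type, Fintype.sum_bool]
  exact add_comm _ _

lemma P_le (m : ℕ) : P m ≤ 2 ^ m := by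
  calc P m ≤ Finset.univ.card := Finset.card_filter_le _ _
    _ = 2 ^ m := by simp [Finset.card_univ]

lemma M_succ (m : ℕ) : M (m+1) = M m + P m := by
  rw [M, card_split]
  simp only [sc_false, sc_true]
  rw [← P, ← M, add_comm]

lemma P_succ (m : ℕ) : P (m+1) = M m + (2 ^ m - P m) := by
  rw [P, card_split]
  simp only [sc_false, sc_true, pc_false, pc_true]
  have h1 : (Finset.univ.filter
      (fun ε : Fin m → Bool => ((sigmaCount m ε + parCount m ε) + parCount m ε) % 2 = 0))
      = Finset.univ.filter (fun ε : Fin m → Bool => sigmaCount m ε % 2 = 0) := by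
    apply Finset.filter_congr; intro ε _; constructor <;> (intro h; omega)
  have h2 : (Finset.univ.filter
      (fun ε : Fin m → Bool => (sigmaCount m ε + (1 + parCount m ε)) % 2 = 0))
      = Finset.univ.filter
        (fun ε : Fin m → Bool => ¬ ((sigmaCount m ε + parCount m ε) % 2 = 0)) := by
    apply Finset.filter_congr; intro ε _
    constructor <;> (intro h; simp at *; omega)
  rw [h1, h2, ← M]
  congr 1
  have := Finset.card_filter_add_card_filter_not
    (s := (Finset.univ : Finset (Fin m → Bool)))
    (p := fun ε => (sigmaCount m ε + parCount m ε) % 2 = 0)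
  rw [Finset.card_univ] at this
  simp only [Fintype.card_fun, Fintype.card_fin, Fintype.card_bool] at this
  rw [← P] at this
  omega

theorem stmt_2 (n : ℕ) (hn : 1 ≤ n) :
    M n = M (n - 1) + P (n - 1) ∧
    (P n : ℤ) = 2 ^ (n - 1) - P (n - 1) + M (n - 1) := by
  obtain ⟨m, rfl⟩ : ∃ m, n = m + 1 := ⟨n - 1, by omega⟩
  simp only [Nat.add_sub_cancel]
  refine ⟨M_succ m, ?_⟩
  rw [P_succ m]
  have := P_le m
  push_cast [Nat.cast_sub this]
  ring
end

section
/- If A is an n×n unitary matrix with A·conj(A) = I, and B is the diagonal unitary matrix with entries e^{iθ_k} where 0 < θ_1 < θ_2 < ... < θ_n < 2π, and A·conj(B)·A = I, then A is diagonal with entries a_{kk} = ±e^{iθ_k/2}. -/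
open Matrix Complex

theorem stmt_3 (n : ℕ) (A : Matrix (Fin n) (Fin n) ℂ) (θ : Fin n → ℝ)
    (hθ0 : ∀ k, 0 < θ k) (hθ2 : ∀ k, θ k < 2 * Real.pi) (hmono : StrictMono θ)
    (hA : A ∈ Matrix.unitaryGroup (Fin n) ℂ)
    (hAA : A * A.map (starRingEnd ℂ) = 1)
    (hABA :
      A * (Matrix.diagonal fun k => Complex.exp (θ k * Complex.I)).map (starRingEnd ℂ) * A = 1) :
    ∃ ε : Fin n → Bool,
      A = Matrix.diagonal fun k =>
        (if ε k then (-1 : ℂ) else 1) * Complex.exp ((θ k / 2 : ℝ) * Complex.I) := by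
  set c : Fin n → ℂ := fun k => Complex.exp (θ k * Complex.I) with hc
  have hmapmap : ∀ M : Matrix (Fin n) (Fin n) ℂ,
      (M.map (starRingEnd ℂ)).map (starRingEnd ℂ) = M := by
    intro M; ext i j; simp
  have hconjA : A.map (starRingEnd ℂ) * A = 1 := by
    have h := congrArg (fun M => M.map (starRingEnd ℂ)) hAA
    simpa [Matrix.map_mul, hmapmap, Matrix.map_one] using h
  have h2 : (Matrix.diagonal c).map (starRingEnd ℂ) =
      A.map (starRingEnd ℂ) * A.map (starRingEnd ℂ) := by
    calc (Matrix.diagonal c).map (starRingEnd ℂ)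
        = (A.map (starRingEnd ℂ) * A) * (Matrix.diagonal c).map (starRingEnd ℂ)
          * (A * A.map (starRingEnd ℂ)) := by rw [hconjA, hAA]; simp
      _ = A.map (starRingEnd ℂ) * (A * (Matrix.diagonal c).map (starRingEnd ℂ) * A)
          * A.map (starRingEnd ℂ) := by simp only [mul_assoc]
      _ = A.map (starRingEnd ℂ) * A.map (starRingEnd ℂ) := by rw [hABA]; simp
  have hsq : A * A = Matrix.diagonal c := by
    have h := congrArg (fun M => M.map (starRingEnd ℂ)) h2
    simpa [Matrix.map_mul, hmapmap] using h.symm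
  have hcomm : A * Matrix.diagonal c = Matrix.diagonal c * A := by
    rw [← hsq, mul_assoc]
  have hdist : ∀ i j : Fin n, i ≠ j → c i ≠ c j := by
    intro i j hij h
    rw [hc] at h
    rw [Complex.exp_eq_exp_iff_exists_int] at h
    obtain ⟨m, hm⟩ := h
    have him := congrArg Complex.im hm
    simp [Complex.add_im, Complex.mul_im] at him
    have hm2 : θ i = θ j + 2 * Real.pi * m := by
      simpa [mul_comm] using him
    have hi0 := hθ0 i; have hi2 := hθ2 i
    have hj0 := hθ0 j; have hj2 := hθ2 j
    have hpi := Real.pi_pos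
    have hne : θ i ≠ θ j := fun h => hij (hmono.injective h)
    have hm0 : m ≠ 0 := by
      intro h; rw [h] at hm2; simp at hm2; exact hne hm2
    rcases lt_or_gt_of_ne hm0 with hneg | hpos
    · have : (m : ℝ) ≤ -1 := by exact_mod_cast (by omega : m ≤ -1)
      nlinarith
    · have : (1 : ℝ) ≤ m := by exact_mod_cast hpos
      nlinarith
  have hoff : ∀ i j : Fin n, i ≠ j → A i j = 0 := by
    intro i j hij
    have h := congrFun (congrFun hcomm i) j
    simp [Matrix.mul_diagonal, Matrix.diagonal_mul] at h
    have h3 : A i j * (c j - c i) = 0 := by ring_nf; linear_combination h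
    rcases mul_eq_zero.mp h3 with h4 | h4
    · exact h4
    · exact (hdist j i (Ne.symm hij) (sub_eq_zero.mp h4)).elim
  have hdiag : ∀ k, A k k * A k k = c k := by
    intro k
    have h := congrFun (congrFun hsq k) k
    simp [Matrix.mul_apply] at h
    rw [← h, Finset.sum_eq_single k]
    · intro b _ hb; rw [hoff k b (Ne.symm hb)]; ring
    · intro h'; exact absurd (Finset.mem_univ k) h'
  set d : Fin n → ℂ := fun k => Complex.exp ((θ k / 2 : ℝ) * Complex.I) with hd
  have hd2 : ∀ k, d k * d k = c k := by
    intro k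
    rw [hd, hc, ← Complex.exp_add]
    congr 1
    push_cast
    ring
  have hcases : ∀ k, A k k = d k ∨ A k k = -d k := by
    intro k
    have : (A k k - d k) * (A k k + d k) = 0 := by
      have := hdiag k
      rw [← hd2 k] at this
      ring_nf
      linear_combination this
    rcases mul_eq_zero.mp this with h | h
    · left; exact sub_eq_zero.mp h
    · right; linear_combination h
  refine ⟨fun k => decide (A k k = -d k), ?_⟩
  ext i j
  by_cases hij : i = j
  · subst hij
    simp only [Matrix.diagonal_apply_eq]
    by_cases h : A i i = -d i
    · simp [h, hd]
    · rcases hcases i with h' | h'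
      · have hne : cexp ((θ i : ℂ) / 2 * I) ≠ -cexp ((θ i : ℂ) / 2 * I) := by
          intro he
          exact Complex.exp_ne_zero _ (by linear_combination he / 2)
        simp [h, h', hd, hne]
      · exact absurd h' h
  · rw [Matrix.diagonal_apply_ne _ hij, hoff i j hij]
end

section
/- If A is an n×n unitary matrix satisfying A·conj(A) = I and A·conj(B)·A = I where B = diag(e^{iθ_1},...,e^{iθ_n}) with 0 < θ_1 < ... < θ_n < 2π, then each entry a_{jk} of A can be written a_{jk} = r_{jk}·e^{iθ_k/2} with r_{jk} real, and the real matrix (r_{jk}) is orthogonal. -/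
open Matrix Complex

theorem stmt_4 (n : ℕ) (A : Matrix (Fin n) (Fin n) ℂ) (θ : Fin n → ℝ)
    (hθ0 : ∀ k, 0 < θ k) (hθ2 : ∀ k, θ k < 2 * Real.pi) (hmono : StrictMono θ)
    (hA : A ∈ Matrix.unitaryGroup (Fin n) ℂ)
    (hAA : A * A.map (starRingEnd ℂ) = 1)
    (hABA :
      A * (Matrix.diagonal fun k => Complex.exp (θ k * Complex.I)).map (starRingEnd ℂ) * A = 1) :
    ∃ r : Matrix (Fin n) (Fin n) ℝ,
      (∀ j k, A j k = (r j k : ℂ) * Complex.exp ((θ k / 2 : ℝ) * Complex.I)) ∧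
      r * rᵀ = 1 ∧ rᵀ * r = 1 := by
  classical
  have hstar : star A * A = 1 := hA.1
  have hinv2 : A⁻¹ = A.map (starRingEnd ℂ) := Matrix.inv_eq_right_inv hAA
  have hinv3 : A⁻¹ = A * (Matrix.diagonal fun k => Complex.exp (θ k * Complex.I)).map (starRingEnd ℂ) :=
    Matrix.inv_eq_left_inv hABA
  have hkey : ∀ j k, (starRingEnd ℂ) (A j k) = A j k * Complex.exp (-(θ k * Complex.I)) := by
    intro j k
    have h := congrFun (congrFun (hinv2.symm.trans hinv3) j) k
    rw [Matrix.diagonal_map (map_zero _), Matrix.mul_diagonal] at h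
    rw [Matrix.map_apply] at h
    rw [h, ← Complex.exp_conj]
    congr 1
    simp [Complex.conj_I, mul_neg]
  set r : Matrix (Fin n) (Fin n) ℝ :=
    fun j k => (A j k * Complex.exp (-((θ k / 2 : ℝ) * Complex.I))).re with hr
  have hcreal : ∀ j k,
      ((r j k : ℝ) : ℂ) = A j k * Complex.exp (-((θ k / 2 : ℝ) * Complex.I)) := by
    intro j k
    rw [hr]
    apply Complex.conj_eq_iff_re.mp
    rw [_root_.map_mul, hkey, ← Complex.exp_conj, mul_assoc, ← Complex.exp_add]
    congr 1
    simp only [map_neg, _root_.map_mul, Complex.conj_ofReal, Complex.conj_I]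
    push_cast
    ring
  have hAr : ∀ j k, A j k = (r j k : ℂ) * Complex.exp ((θ k / 2 : ℝ) * Complex.I) := by
    intro j k
    rw [hcreal, mul_assoc, ← Complex.exp_add, neg_add_cancel, Complex.exp_zero, mul_one]
  have horthoC : ∀ j k, (∑ i, ((r i j : ℂ) * (r i k))) = if j = k then 1 else 0 := by
    intro j k
    have h1 : ∑ i, (starRingEnd ℂ) (A i j) * A i k = if j = k then 1 else 0 := by
      have := congrFun (congrFun hstar j) k
      simpa [Matrix.mul_apply, Matrix.one_apply, Matrix.conjTranspose_apply] using this
    calc ∑ i, ((r i j : ℂ) * (r i k))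
        = Complex.exp ((θ j / 2 : ℝ) * Complex.I) * Complex.exp (-((θ k / 2 : ℝ) * Complex.I)) *
            ∑ i, (starRingEnd ℂ) (A i j) * A i k := by
          rw [Finset.mul_sum]
          refine Finset.sum_congr rfl fun i _ => ?_
          have h2 : ((r i j : ℝ) : ℂ) = (starRingEnd ℂ) ((r i j : ℝ) : ℂ) :=
            (Complex.conj_ofReal _).symm
          rw [h2, hcreal, hcreal i k, _root_.map_mul, ← Complex.exp_conj]
          simp only [map_neg, _root_.map_mul, Complex.conj_ofReal, Complex.conj_I, mul_neg, neg_neg]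
          ring
      _ = if j = k then 1 else 0 := by
          rw [h1]
          split_ifs with h
          · subst h
            rw [← Complex.exp_add, add_neg_cancel, Complex.exp_zero, one_mul]
          · rw [mul_zero]
  have hortho : rᵀ * r = 1 := by
    ext j k
    have hC := horthoC j k
    have : ((∑ i, r i j * r i k : ℝ) : ℂ) = ((if j = k then (1 : ℝ) else 0 : ℝ) : ℂ) := by
      push_cast
      rw [hC]
      split_ifs <;> norm_num
    have hR : (∑ i, r i j * r i k : ℝ) = if j = k then (1 : ℝ) else 0 :=
      Complex.ofReal_inj.mp this
    simpa [Matrix.mul_apply, Matrix.transpose_apply, Matrix.one_apply] using hR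
  exact ⟨r, hAr, mul_eq_one_comm.mpr hortho, hortho⟩
end

section
/- For any A ∈ U(n) with A·conj(A) = I there exists U ∈ U(n) such that A = U·conj(U)^{-1}. -/
/-!
Since `A` is unitary, `A * conj A = 1` forces `conj A = Aᴴ`, i.e. `A` is symmetric. The continuous
functional calculus gives a unitary square root `S` of `A`; as the spectrum of `A` is finite, `S` is
a polynomial in `A` (Lagrange interpolation), hence symmetric too. Then `conj S = Sᴴ = S⁻¹`, so
`A = S * S = S * (conj S)⁻¹`.
-/

open Matrix Polynomial
open scoped Matrix.Norms.L2Operator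

theorem cfc_eq_aeval_of_finite_spectrum {R A : Type*} {p : A → Prop} [Field R] [StarRing R]
    [MetricSpace R] [IsTopologicalRing R] [ContinuousStar R] [TopologicalSpace A] [Ring A]
    [StarRing A] [Algebra R A] [ContinuousFunctionalCalculus R A p] (f : R → R) (a : A)
    (hfin : (spectrum R a).Finite) (ha : p a := by cfc_tac) :
    ∃ q : R[X], cfc f a = aeval a q := by
  classical
  refine ⟨Lagrange.interpolate hfin.toFinset id f, ?_⟩
  rw [← cfc_polynomial _ a]
  refine cfc_congr fun x hx ↦ ?_
  exact (Lagrange.eval_interpolate_at_node _ Function.injective_id.injOn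
    (hfin.mem_toFinset.mpr hx)).symm

theorem exists_aeval_mem_unitary_sq_eq {A : Type*} [TopologicalSpace A] [Ring A] [StarRing A]
    [Algebra ℂ A] [ContinuousFunctionalCalculus ℂ A IsStarNormal] {u : A} (hu : u ∈ unitary A)
    (hfin : (spectrum ℂ u).Finite) : ∃ q : ℂ[X], aeval u q ∈ unitary A ∧ aeval u q ^ 2 = u := by
  have : IsStarNormal u := isStarNormal_of_mem_unitary hu
  set sqrt : ℂ → ℂ := fun z ↦ z ^ ((2 : ℕ)⁻¹ : ℂ)
  -- The principal square root jumps across the negative real axis; only the finiteness of the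
  -- spectrum makes it continuous there.
  have hsqrt : ContinuousOn sqrt (spectrum ℂ u) := hfin.continuousOn _
  obtain ⟨q, hq⟩ := cfc_eq_aeval_of_finite_spectrum sqrt u hfin
  refine ⟨q, hq ▸ (cfc_unitary_iff sqrt u).mpr fun z hz ↦ ?_, ?_⟩
  · have hz : ‖z‖ = 1 :=
      CStarRing.norm_of_mem_unitary (spectrum_subset_unitary_of_mem_unitary hu hz)
    rw [RCLike.star_def, Complex.conj_mul', Complex.norm_cpow_inv_nat, hz]
    norm_num
  · rw [← hq, ← cfc_pow sqrt 2 u]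
    exact (cfc_congr fun z _ ↦ Complex.cpow_nat_inv_pow z two_ne_zero).trans (cfc_id' ℂ u)

namespace Matrix

theorem IsSymm.aeval {ι R : Type*} [Fintype ι] [DecidableEq ι] [CommSemiring R]
    {A : Matrix ι ι R} (hA : A.IsSymm) (q : R[X]) : (aeval A q).IsSymm := by
  induction q using Polynomial.induction_on with
  | C r => simp [algebraMap_eq_diagonal, IsSymm]
  | add q₁ q₂ h₁ h₂ => simpa using h₁.add h₂
  | monomial k r _ => simpa [Algebra.smul_def] using (hA.pow (k + 1)).smul r

theorem IsSymm.map_starRingEnd {ι α : Type*} [CommSemiring α] [StarRing α]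
    {S : Matrix ι ι α} (hS : S.IsSymm) : S.map (starRingEnd α) = star S := by
  conv_rhs => rw [← hS.eq]
  rfl

theorem isSymm_of_mem_unitary_of_mul_map_starRingEnd {ι α : Type*} [Fintype ι] [DecidableEq ι]
    [CommRing α] [StarRing α] {A : Matrix ι ι α} (hAU : A ∈ unitary (Matrix ι ι α))
    (hA : A * A.map (starRingEnd α) = 1) : A.IsSymm := by
  have h : Aᴴ = A.map (starRingEnd α) :=
    left_inv_eq_right_inv (Unitary.star_mul_self_of_mem hAU) hA
  exact map_injective star_injective h

end Matrix

theorem stmt_13 (n : ℕ) (A : Matrix (Fin n) (Fin n) ℂ)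
    (hAU : A ∈ Matrix.unitaryGroup (Fin n) ℂ)
    (hA : A * A.map (starRingEnd ℂ) = 1) :
    ∃ U : Matrix (Fin n) (Fin n) ℂ, U ∈ Matrix.unitaryGroup (Fin n) ℂ ∧
      A = U * (U.map (starRingEnd ℂ))⁻¹ := by
  have hsymm := isSymm_of_mem_unitary_of_mul_map_starRingEnd hAU hA
  obtain ⟨q, hU, hsq⟩ := exists_aeval_mem_unitary_sq_eq hAU (finite_spectrum A)
  refine ⟨aeval A q, hU, ?_⟩
  rw [(hsymm.aeval q).map_starRingEnd, inv_eq_left_inv (Unitary.mul_star_self_of_mem hU), ← sq,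
    hsq]
end

section
/- For every n ≥ 1, the equation A·conj(B)·A = I with A ∈ U(n), A·conj(A) = I and B = diag(e^{iθ_1},...,e^{iθ_n}) with 0 < θ_1 < ... < θ_n < 2π has exactly 2^n solutions, namely the diagonal matrices A^ε with entries e^{i(θ_k/2 + ε_k π)} for ε ∈ {0,1}^n. -/
open Matrix Complex

private lemma exp_real_I_inj {x y : ℝ}
    (h : Complex.exp (x * Complex.I) = Complex.exp (y * Complex.I))
    (hxy : |x - y| < 2 * Real.pi) : x = y := by
  rw [Complex.exp_eq_exp_iff_exists_int] at h
  obtain ⟨m, hm⟩ := h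
  have hx : (x : ℂ) = y + m * (2 * Real.pi) := by
    have h0 : ((x : ℂ) - y - m * (2 * Real.pi)) * Complex.I = 0 := by
      linear_combination hm
    rcases mul_eq_zero.mp h0 with h' | h'
    · linear_combination h'
    · exact absurd h' Complex.I_ne_zero
  have hx' : x = y + m * (2 * Real.pi) := by exact_mod_cast hx
  have hm0 : m = 0 := by
    by_contra hm0
    have h1 : (1 : ℝ) ≤ |(m : ℝ)| := by
      have : (1 : ℤ) ≤ |m| := Int.one_le_abs hm0
      exact_mod_cast this
    have h2 : |x - y| = |(m : ℝ)| * (2 * Real.pi) := by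
      rw [hx', show y + m * (2 * Real.pi) - y = m * (2 * Real.pi) by ring,
        abs_mul, _root_.abs_of_nonneg (by positivity : (0:ℝ) ≤ 2 * Real.pi)]
    nlinarith [Real.pi_pos]
  rw [hm0] at hx'; push_cast at hx'; linarith

theorem stmt_14 (n : ℕ) (hn : 1 ≤ n) (θ : Fin n → ℝ)
    (hθ0 : ∀ k, 0 < θ k) (hθ2 : ∀ k, θ k < 2 * Real.pi) (hmono : StrictMono θ) :
    {A : Matrix (Fin n) (Fin n) ℂ |
        A ∈ Matrix.unitaryGroup (Fin n) ℂ ∧ A * A.map (starRingEnd ℂ) = 1 ∧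
        A * (Matrix.diagonal fun k => Complex.exp (θ k * Complex.I)).map (starRingEnd ℂ)
          * A = 1} =
      {A : Matrix (Fin n) (Fin n) ℂ | ∃ ε : Fin n → Bool,
        A = Matrix.diagonal fun k =>
          Complex.exp (((θ k / 2 + if ε k then Real.pi else 0 : ℝ)) * Complex.I)} ∧
    Set.ncard {A : Matrix (Fin n) (Fin n) ℂ |
        A ∈ Matrix.unitaryGroup (Fin n) ℂ ∧ A * A.map (starRingEnd ℂ) = 1 ∧
        A * (Matrix.diagonal fun k => Complex.exp (θ k * Complex.I)).map (starRingEnd ℂ)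
          * A = 1} = 2 ^ n := by
  classical
  -- the conjugated diagonal matrix
  have hD : (Matrix.diagonal fun k => Complex.exp (θ k * Complex.I)).map (starRingEnd ℂ)
      = Matrix.diagonal (fun k => Complex.exp (-(θ k : ℂ) * Complex.I)) := by
    rw [Matrix.diagonal_map (map_zero _)]
    refine congrArg Matrix.diagonal (funext fun k => ?_)
    simp only [Function.comp_apply, ← Complex.exp_conj]
    congr 1
    rw [_root_.map_mul, Complex.conj_I, Complex.conj_ofReal]
    ring
  set d : Fin n → ℂ := fun k => Complex.exp (-(θ k : ℂ) * Complex.I) with hd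
  -- distinctness of the entries of d
  have hdist : ∀ i j : Fin n, i ≠ j → d i ≠ d j := by
    intro i j hij h
    have habs : |(-(θ i)) - (-(θ j))| < 2 * Real.pi :=
      abs_sub_lt_iff.mpr ⟨by linarith [hθ0 i, hθ2 j], by linarith [hθ0 j, hθ2 i]⟩
    have hexp : Complex.exp ((-(θ i) : ℝ) * Complex.I)
        = Complex.exp ((-(θ j) : ℝ) * Complex.I) := by
      push_cast; simpa [hd] using h
    have := exp_real_I_inj hexp habs
    exact hij (hmono.injective (by linarith))
  set w : Fin n → ℂ := fun k => Complex.exp ((θ k / 2 : ℝ) * Complex.I) with hw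
  have hw2 : ∀ k, w k * w k = Complex.exp ((θ k : ℝ) * Complex.I) := by
    intro k
    rw [hw, ← Complex.exp_add]
    congr 1
    push_cast
    ring
  have hwd : ∀ k, Complex.exp ((θ k : ℝ) * Complex.I) * d k = 1 := by
    intro k
    rw [hd, ← Complex.exp_add]
    simp
  -- key: solutions of the third equation are exactly the prescribed diagonal matrices
  have key : ∀ A : Matrix (Fin n) (Fin n) ℂ,
      A * Matrix.diagonal d * A = 1 →
      ∃ ε : Fin n → Bool, A = Matrix.diagonal fun k =>
        Complex.exp (((θ k / 2 + if ε k then Real.pi else 0 : ℝ)) * Complex.I) := by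
    intro A h3
    -- A commutes with diagonal d
    have hcomm : A * Matrix.diagonal d = Matrix.diagonal d * A := by
      have h1 : (A * Matrix.diagonal d) * A = 1 := h3
      have h2 : A * (Matrix.diagonal d * A) = 1 := by rw [← mul_assoc]; exact h1
      calc A * Matrix.diagonal d
          = (A * Matrix.diagonal d) * (A * (Matrix.diagonal d * A)) := by rw [h2, mul_one]
        _ = ((A * Matrix.diagonal d) * A) * (Matrix.diagonal d * A) := by
            simp only [mul_assoc]
        _ = Matrix.diagonal d * A := by rw [h1, one_mul]
    -- so A is diagonal
    have hAdiag : ∀ i j, i ≠ j → A i j = 0 := by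
      intro i j hij
      have hcc := congrFun (congrFun hcomm i) j
      rw [Matrix.mul_diagonal, Matrix.diagonal_mul] at hcc
      have h0 : A i j * (d j - d i) = 0 := by linear_combination hcc
      rcases mul_eq_zero.mp h0 with h' | h'
      · exact h'
      · exact absurd (sub_eq_zero.mp h') (hdist j i hij.symm)
    -- diagonal entries square to exp(θ k I)
    have hsq : ∀ k, A k k * A k k = Complex.exp ((θ k : ℝ) * Complex.I) := by
      intro k
      have h1 := congrFun (congrFun h3 k) k
      rw [Matrix.mul_apply] at h1
      rw [Finset.sum_eq_single k (fun j _ hj => by rw [hAdiag j k hj, mul_zero])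
        (fun h => absurd (Finset.mem_univ k) h)] at h1
      rw [Matrix.mul_diagonal, Matrix.one_apply_eq] at h1
      linear_combination Complex.exp ((θ k : ℝ) * Complex.I) * h1
        - A k k * A k k * hwd k
    refine ⟨fun k => if A k k = w k then false else true, ?_⟩
    ext i j
    rcases eq_or_ne i j with rfl | hij
    · rw [Matrix.diagonal_apply_eq]
      simp only []
      by_cases hcase : A i i = w i
      · simp only [if_pos hcase, Bool.false_eq_true, if_false, add_zero]
        simpa only [hw] using hcase
      · simp only [if_neg hcase, if_true]
        have hprod : (A i i - w i) * (A i i + w i) = 0 := by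
          have := hsq i
          rw [← hw2 i] at this
          linear_combination this
        rcases mul_eq_zero.mp hprod with h' | h'
        · exact absurd (sub_eq_zero.mp h') hcase
        · have hAi : A i i = -w i := by linear_combination h'
          rw [hAi, hw]
          rw [show (((θ i / 2 + Real.pi : ℝ)) : ℂ) * Complex.I
              = (θ i / 2 : ℝ) * Complex.I + Real.pi * Complex.I by push_cast; ring,
            Complex.exp_add, Complex.exp_pi_mul_I]
          ring
    · rw [Matrix.diagonal_apply_ne _ hij]
      exact hAdiag i j hij
  -- conversely, every prescribed diagonal matrix is a solution
  have conv : ∀ ε : Fin n → Bool,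
      (Matrix.diagonal fun k =>
          Complex.exp (((θ k / 2 + if ε k then Real.pi else 0 : ℝ)) * Complex.I)) ∈
        {A : Matrix (Fin n) (Fin n) ℂ |
          A ∈ Matrix.unitaryGroup (Fin n) ℂ ∧ A * A.map (starRingEnd ℂ) = 1 ∧
          A * (Matrix.diagonal fun k => Complex.exp (θ k * Complex.I)).map (starRingEnd ℂ)
            * A = 1} := by
    intro ε
    set c : Fin n → ℝ := fun k => θ k / 2 + if ε k then Real.pi else 0 with hc
    set a : Fin n → ℂ := fun k => Complex.exp ((c k : ℝ) * Complex.I) with ha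
    have hstar : ∀ k, (starRingEnd ℂ) (a k) = Complex.exp (-(c k : ℂ) * Complex.I) := by
      intro k
      simp only [ha, ← Complex.exp_conj]
      congr 1
      rw [_root_.map_mul, Complex.conj_I, Complex.conj_ofReal]
      ring
    have hselfinv : ∀ k, a k * Complex.exp (-(c k : ℂ) * Complex.I) = 1 := by
      intro k
      rw [ha, ← Complex.exp_add]
      simp
    have hmapconj : (Matrix.diagonal a).map (starRingEnd ℂ)
        = Matrix.diagonal fun k => Complex.exp (-(c k : ℂ) * Complex.I) := by
      rw [Matrix.diagonal_map (map_zero _)]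
      exact congrArg Matrix.diagonal (funext fun k => hstar k)
    refine ⟨?_, ?_, ?_⟩
    · rw [Matrix.mem_unitaryGroup_iff, Matrix.star_eq_conjTranspose,
        Matrix.diagonal_conjTranspose, Matrix.diagonal_mul_diagonal,
        ← Matrix.diagonal_one]
      refine congrArg Matrix.diagonal (funext fun k => ?_)
      show a k * star (a k) = 1
      rw [RCLike.star_def, hstar k]
      exact hselfinv k
    · rw [hmapconj, Matrix.diagonal_mul_diagonal, ← Matrix.diagonal_one]
      exact congrArg Matrix.diagonal (funext fun k => hselfinv k)
    · rw [hD, Matrix.diagonal_mul_diagonal, Matrix.diagonal_mul_diagonal,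
        ← Matrix.diagonal_one]
      refine congrArg Matrix.diagonal (funext fun k => ?_)
      show a k * d k * a k = 1
      simp only [ha, hd]
      rw [← Complex.exp_add, ← Complex.exp_add]
      rcases Bool.eq_false_or_eq_true (ε k) with hb | hb
      swap
      · have hck : c k = θ k / 2 := by simp [hc, hb]
        rw [hck, show ((θ k / 2 : ℝ) : ℂ) * Complex.I + -(θ k : ℂ) * Complex.I
            + ((θ k / 2 : ℝ) : ℂ) * Complex.I = 0 by push_cast; ring]
        exact Complex.exp_zero
      · have hck : c k = θ k / 2 + Real.pi := by simp [hc, hb]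
        rw [hck, show ((θ k / 2 + Real.pi : ℝ) : ℂ) * Complex.I + -(θ k : ℂ) * Complex.I
            + ((θ k / 2 + Real.pi : ℝ) : ℂ) * Complex.I = 2 * Real.pi * Complex.I by
          push_cast; ring]
        exact Complex.exp_two_pi_mul_I
  -- the set equality
  have hsets : {A : Matrix (Fin n) (Fin n) ℂ |
        A ∈ Matrix.unitaryGroup (Fin n) ℂ ∧ A * A.map (starRingEnd ℂ) = 1 ∧
        A * (Matrix.diagonal fun k => Complex.exp (θ k * Complex.I)).map (starRingEnd ℂ)
          * A = 1} =
      {A : Matrix (Fin n) (Fin n) ℂ | ∃ ε : Fin n → Bool,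
        A = Matrix.diagonal fun k =>
          Complex.exp (((θ k / 2 + if ε k then Real.pi else 0 : ℝ)) * Complex.I)} := by
    ext A
    constructor
    · rintro ⟨-, -, h3⟩
      rw [hD] at h3
      exact key A h3
    · rintro ⟨ε, rfl⟩
      exact conv ε
  refine ⟨hsets, ?_⟩
  rw [hsets]
  -- cardinality
  set f : (Fin n → Bool) → Matrix (Fin n) (Fin n) ℂ := fun ε =>
    Matrix.diagonal fun k =>
      Complex.exp (((θ k / 2 + if ε k then Real.pi else 0 : ℝ)) * Complex.I) with hf
  have hrange : {A : Matrix (Fin n) (Fin n) ℂ | ∃ ε : Fin n → Bool, A = f ε}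
      = Set.range f := by
    ext A
    simp only [Set.mem_setOf_eq, Set.mem_range, eq_comm]
  have hinj : Function.Injective f := by
    intro ε ε' hεε'
    funext k
    have hentry := congrFun (congrFun hεε' k) k
    rw [hf] at hentry
    simp only [Matrix.diagonal_apply_eq] at hentry
    have heq : θ k / 2 + (if ε k then Real.pi else 0)
        = θ k / 2 + (if ε' k then Real.pi else 0) := by
      apply exp_real_I_inj hentry
      have h2π : |Real.pi| < 2 * Real.pi := by
        rw [_root_.abs_of_nonneg Real.pi_pos.le]; linarith [Real.pi_pos]
      rcases Bool.eq_false_or_eq_true (ε k) with hb | hb <;> rw [hb] <;>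
        rcases Bool.eq_false_or_eq_true (ε' k) with hb' | hb' <;> rw [hb'] <;>
        simp <;>
        first
          | exact h2π
          | (rw [abs_sub_comm]; exact h2π)
          | positivity
    rcases Bool.eq_false_or_eq_true (ε k) with hb | hb <;>
      rcases Bool.eq_false_or_eq_true (ε' k) with hb' | hb' <;>
      rw [hb, hb'] <;> rw [hb, hb'] at heq <;> simp at heq <;>
      first
        | rfl
        | exact absurd heq (by positivity)
        | exact absurd heq.symm (by positivity)
        | exact absurd heq Real.pi_ne_zero
        | skip
  rw [hrange, ← Nat.card_coe_set_eq, Nat.card_range_of_injective hinj,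
    Nat.card_eq_fintype_card]
  simp
end

section
/- Let θ_1 < ... < θ_n be angles in (0, 2π) and ε ∈ {0,1}^n. For the linear map α^ε on real symmetric n×n matrices given by (α^ε Q)_{jk} = 2cos((θ_j − θ_k)/4 + (ε_j − ε_k)π/2)·q_{jk}, the determinant of α^ε is nonzero, and its sign equals (−1)^{σ(ε)} where σ(ε) is the parity of the number of pairs j < k with ε_j = 0 and ε_k = 1. -/
open Matrix

/-- The space `Sym(n, ℝ)` of real symmetric `n × n` matrices. -/
def symMat (n : ℕ) : Submodule ℝ (Matrix (Fin n) (Fin n) ℝ) where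
  carrier := {Q | Qᵀ = Q}
  add_mem' := by
    intro a b ha hb
    simp only [Set.mem_setOf_eq] at *
    rw [Matrix.transpose_add, ha, hb]
  zero_mem' := by simp
  smul_mem' := by
    intro c a ha
    simp only [Set.mem_setOf_eq] at *
    rw [Matrix.transpose_smul, ha]

/-- Entrywise rescaling of matrices by coefficients `c j k`, as a linear map. -/
def entryScale (n : ℕ) (c : Fin n → Fin n → ℝ) :
    Matrix (Fin n) (Fin n) ℝ →ₗ[ℝ] Matrix (Fin n) (Fin n) ℝ where
  toFun Q := Matrix.of fun j k => c j k * Q j k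
  map_add' a b := by ext j k; simp [mul_add]
  map_smul' t a := by ext j k; simp [Matrix.smul_apply]; ring

/-- The coefficients `2 cos((θ j − θ k)/4 + (ε j − ε k) π / 2)`. -/
noncomputable def alphaCoeff (n : ℕ) (θ : Fin n → ℝ) (ε : Fin n → Bool)
    (j k : Fin n) : ℝ :=
  2 * Real.cos ((θ j - θ k) / 4 +
    (((if ε j then 1 else 0) - (if ε k then 1 else 0) : ℝ)) * Real.pi / 2)

lemma alphaCoeff_symm (n : ℕ) (θ : Fin n → ℝ) (ε : Fin n → Bool) (j k : Fin n) :
    alphaCoeff n θ ε k j = alphaCoeff n θ ε j k := by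
  unfold alphaCoeff
  rw [show (θ k - θ j) / 4 +
      (((if ε k then 1 else 0) - (if ε j then 1 else 0) : ℝ)) * Real.pi / 2 =
      -((θ j - θ k) / 4 +
      (((if ε j then 1 else 0) - (if ε k then 1 else 0) : ℝ)) * Real.pi / 2) by ring,
    Real.cos_neg]

/-- The operator `α^ε` on the space of real symmetric matrices. -/
noncomputable def alphaEps (n : ℕ) (θ : Fin n → ℝ) (ε : Fin n → Bool) :
    symMat n →ₗ[ℝ] symMat n :=
  (entryScale n (alphaCoeff n θ ε)).restrict (p := symMat n) (q := symMat n)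
    (by
      intro Q hQ
      have hQ' : Qᵀ = Q := hQ
      show _ ∈ {Q : Matrix (Fin n) (Fin n) ℝ | Qᵀ = Q}
      ext j k
      show (entryScale n (alphaCoeff n θ ε) Q) k j = _
      show alphaCoeff n θ ε k j * Q k j = alphaCoeff n θ ε j k * Q j k
      rw [alphaCoeff_symm, show Q k j = Qᵀ j k from rfl, hQ'])

/-!
In the coordinates `q j k`, `j ≤ k`, of a symmetric matrix, `α^ε` is diagonal, so its determinant
is the product of the coefficients `2 cos((θ j - θ k)/4 + (ε j - ε k) π / 2)` over `j ≤ k`.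
The diagonal ones equal `2`. For `j < k` the angle `x = (θ j - θ k)/4` lies in `(-π/2, 0)`, so
`2 cos x > 0`, `2 cos (x + π/2) = -2 sin x > 0` and `2 cos (x - π/2) = 2 sin x < 0`: the negative
coefficients are exactly those with `ε j = 0` and `ε k = 1`.
-/

open Finset Real

lemma Real.sign_eq_coe_sign (r : ℝ) : Real.sign r = ((SignType.sign r : SignType) : ℝ) := by
  rcases lt_trichotomy r 0 with hr | rfl | hr
  · simp [Real.sign_of_neg hr, hr]
  · simp
  · simp [Real.sign_of_pos hr, hr]

lemma Real.sign_prod {ι : Type*} (s : Finset ι) (f : ι → ℝ) :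
    Real.sign (∏ i ∈ s, f i) = ∏ i ∈ s, Real.sign (f i) := by
  simp only [Real.sign_eq_coe_sign]
  exact map_prod (SignType.castHom.comp signHom) f s

abbrev UpperPairs (n : ℕ) := {p : Fin n × Fin n // p.1 ≤ p.2}

def symMatEquivUpper (n : ℕ) : symMat n ≃ₗ[ℝ] (UpperPairs n → ℝ) where
  toFun Q p := (Q : Matrix (Fin n) (Fin n) ℝ) p.1.1 p.1.2
  map_add' _ _ := rfl
  map_smul' _ _ := rfl
  invFun f := ⟨Matrix.of fun j k => f ⟨(min j k, max j k), min_le_max⟩, by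
    ext j k
    simp [min_comm, max_comm]⟩
  left_inv Q := by
    ext j k
    rcases le_total j k with h | h
    · simp [h]
    · simpa [h] using congrFun₂ Q.2 j k
  right_inv f := by
    funext p
    simp [p.2]

lemma symMatEquivUpper_symm_apply {n : ℕ} (f : UpperPairs n → ℝ) (p : UpperPairs n) :
    ((symMatEquivUpper n).symm f : Matrix (Fin n) (Fin n) ℝ) p.1.1 p.1.2 = f p := by
  simp [symMatEquivUpper, p.2]

lemma det_entryScale_restrict {n : ℕ} (c : Fin n → Fin n → ℝ)
    (h : ∀ Q ∈ symMat n, entryScale n c Q ∈ symMat n) :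
    LinearMap.det ((entryScale n c).restrict h) = ∏ p : UpperPairs n, c p.1.1 p.1.2 := by
  set e := symMatEquivUpper n
  have hdiag : (e : symMat n →ₗ[ℝ] _) ∘ₗ (entryScale n c).restrict h ∘ₗ (e.symm : _ →ₗ[ℝ] _) =
      Matrix.toLin' (Matrix.diagonal fun p : UpperPairs n => c p.1.1 p.1.2) := by
    refine LinearMap.ext fun f => funext fun p => ?_
    rw [Matrix.toLin'_apply, Matrix.mulVec_diagonal]
    exact congrArg (c p.1.1 p.1.2 * ·) (symMatEquivUpper_symm_apply f p)
  rw [← LinearMap.det_conj _ e, hdiag, LinearMap.det_toLin', Matrix.det_diagonal]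

lemma det_alphaEps (n : ℕ) (θ : Fin n → ℝ) (ε : Fin n → Bool) :
    LinearMap.det (alphaEps n θ ε) = ∏ p : UpperPairs n, alphaCoeff n θ ε p.1.1 p.1.2 :=
  det_entryScale_restrict _ _

lemma sign_two_mul_cos_add_bool {x : ℝ} (hx₁ : -(π / 2) < x) (hx₂ : x < 0) (a b : Bool) :
    Real.sign (2 * cos (x + ((if a then 1 else 0) - (if b then 1 else 0) : ℝ) * π / 2)) =
      if a = false ∧ b = true then -1 else 1 := by
  have hcos : 0 < cos x := Real.cos_pos_of_mem_Ioo ⟨hx₁, by linarith [pi_pos]⟩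
  have hsin : sin x < 0 := Real.sin_neg_of_neg_of_neg_pi_lt hx₂ (by linarith [pi_pos])
  cases a <;> cases b
  · simpa using Real.sign_of_pos (by linarith : 0 < 2 * cos x)
  · simpa [neg_div, ← sub_eq_add_neg, Real.cos_sub_pi_div_two]
      using Real.sign_of_neg (by linarith : 2 * sin x < 0)
  · simpa [Real.cos_add_pi_div_two] using Real.sign_of_pos (by linarith : 0 < 2 * -sin x)
  · simpa using Real.sign_of_pos (by linarith : 0 < 2 * cos x)

lemma sign_alphaCoeff {n : ℕ} {θ : Fin n → ℝ} (hθ0 : ∀ k, 0 < θ k) (hθ2 : ∀ k, θ k < 2 * π)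
    (hmono : StrictMono θ) (ε : Fin n → Bool) {j k : Fin n} (hjk : j ≤ k) :
    Real.sign (alphaCoeff n θ ε j k) = if j < k ∧ ε j = false ∧ ε k = true then -1 else 1 := by
  rcases hjk.eq_or_lt with rfl | hlt
  · simpa [alphaCoeff] using Real.sign_of_pos two_pos
  · have hθjk := hmono hlt
    have hθj := hθ0 j
    have hθk := hθ2 k
    simp only [hlt, true_and]
    exact sign_two_mul_cos_add_bool (x := (θ j - θ k) / 4) (by linarith) (by linarith) (ε j) (ε k)

lemma card_upperPairs_filter_eq_sigmaCount (n : ℕ) (ε : Fin n → Bool) :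
    #{p : UpperPairs n | p.1.1 < p.1.2 ∧ ε p.1.1 = false ∧ ε p.1.2 = true} = sigmaCount n ε :=
  Finset.card_bij (fun p _ => p.1) (by simp) (fun _ _ _ _ => Subtype.ext)
    (fun q hq => ⟨⟨q, (mem_filter.1 hq).2.1.le⟩, by simpa using hq, rfl⟩)

theorem stmt_16 (n : ℕ) (θ : Fin n → ℝ)
    (hθ0 : ∀ k, 0 < θ k) (hθ2 : ∀ k, θ k < 2 * Real.pi) (hmono : StrictMono θ)
    (ε : Fin n → Bool) :
    LinearMap.det (alphaEps n θ ε) ≠ 0 ∧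
    Real.sign (LinearMap.det (alphaEps n θ ε)) = (-1 : ℝ) ^ sigmaCount n ε := by
  have hsign : Real.sign (LinearMap.det (alphaEps n θ ε)) = (-1 : ℝ) ^ sigmaCount n ε := by
    rw [det_alphaEps, Real.sign_prod, ← card_upperPairs_filter_eq_sigmaCount,
      Finset.prod_congr rfl fun p _ => sign_alphaCoeff hθ0 hθ2 hmono ε p.2,
      prod_ite, prod_const, prod_const, one_pow, mul_one]
  refine ⟨fun h => ?_, hsign⟩
  rw [h, Real.sign_zero] at hsign
  exact pow_ne_zero _ (neg_ne_zero.2 one_ne_zero) hsign.symm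
end
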